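/- Let H be a real Hilbert space with closed subspace W, Π₀ the orthogonal projection onto W, T₀ = I − Π₀, and s a symmetric positive semidefinite bilinear form with ι₊‖T₀v‖² ≤ s(T₀v,T₀v) ≤ ι⁺‖T₀v‖² for constants 0 < ι₊ ≤ ι⁺. Then a_h(u,v) := ⟪Π₀u, Π₀v⟫ + s(T₀u, T₀v) defines an inner product on H whose induced norm is equivalent to the original norm with equivalence constants √min(1,ι₊) and √max(1,ι⁺). -/

import Mathlib

open scoped RealInnerProductSpace

/-!
Writing `v = Π₀v + T₀v` with `Π₀v ⊥ T₀v`, Pythagoras gives `‖v‖² = ‖Π₀v‖² + ‖T₀v‖²`, while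
`a_h(v,v) = ‖Π₀v‖² + s(T₀v,T₀v)`. The bounds on `s` sandwich the second summand between
`ι₊‖T₀v‖²` and `ι⁺‖T₀v‖²`, so `a_h(v,v)` lies between `min(1,ι₊)‖v‖²` and `max(1,ι⁺)‖v‖²`.
-/

lemma Real.sqrt_mul_sq (c : ℝ) {x : ℝ} (hx : 0 ≤ x) : √(c * x ^ 2) = √c * x := by
  rw [Real.sqrt_mul' c (sq_nonneg x), Real.sqrt_sq hx]

lemma min_one_mul_add_le_add {ι p t σ : ℝ} (hp : 0 ≤ p) (ht : 0 ≤ t) (hσ : ι * t ≤ σ) :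
    min 1 ι * (p + t) ≤ p + σ := by
  have h₁ : min 1 ι * p ≤ p := mul_le_of_le_one_left hp (min_le_left 1 ι)
  have h₂ : min 1 ι * t ≤ ι * t := mul_le_mul_of_nonneg_right (min_le_right 1 ι) ht
  linarith

lemma add_le_max_one_mul_add {ι p t σ : ℝ} (hp : 0 ≤ p) (ht : 0 ≤ t) (hσ : σ ≤ ι * t) :
    p + σ ≤ max 1 ι * (p + t) := by
  have h₁ : p ≤ max 1 ι * p := le_mul_of_one_le_left hp (le_max_left 1 ι)
  have h₂ : ι * t ≤ max 1 ι * t := mul_le_mul_of_nonneg_right (le_max_right 1 ι) ht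
  linarith

namespace Submodule

variable {E : Type*} [NormedAddCommGroup E] [InnerProductSpace ℝ E]
  (K : Submodule ℝ E) [K.HasOrthogonalProjection] (s : E → E → ℝ)

/-- The form `a_h`, with `Π₀ = K.starProjection` and `T₀ = Kᗮ.starProjection = I - Π₀`. -/
noncomputable def stabilizedForm (u v : E) : ℝ :=
  ⟪K.starProjection u, K.starProjection v⟫ + s (Kᗮ.starProjection u) (Kᗮ.starProjection v)

variable {K s}

lemma stabilizedForm_comm (hs : ∀ u v, s u v = s v u) (u v : E) :
    K.stabilizedForm s u v = K.stabilizedForm s v u := by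
  rw [stabilizedForm, stabilizedForm, real_inner_comm, hs]

lemma isLinearMap_stabilizedForm_left (hs : ∀ v, IsLinearMap ℝ fun u => s u v) (v : E) :
    IsLinearMap ℝ fun u => K.stabilizedForm s u v where
  map_add u w := by
    simp only [stabilizedForm, map_add, inner_add_left, (hs _).map_add]
    ring
  map_smul c u := by
    simp only [stabilizedForm, map_smul, real_inner_smul_left, (hs _).map_smul, smul_eq_mul]
    ring

lemma stabilizedForm_self (v : E) :
    K.stabilizedForm s v v =
      ‖K.starProjection v‖ ^ 2 + s (Kᗮ.starProjection v) (Kᗮ.starProjection v) := by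
  rw [stabilizedForm, real_inner_self_eq_norm_sq]

lemma min_mul_norm_sq_le_stabilizedForm_self {ι : ℝ}
    (hs : ∀ v, ι * ‖Kᗮ.starProjection v‖ ^ 2 ≤ s (Kᗮ.starProjection v) (Kᗮ.starProjection v))
    (v : E) : min 1 ι * ‖v‖ ^ 2 ≤ K.stabilizedForm s v v := by
  rw [stabilizedForm_self, norm_sq_eq_add_norm_sq_starProjection v K]
  exact min_one_mul_add_le_add (sq_nonneg _) (sq_nonneg _) (hs v)

lemma stabilizedForm_self_le_max_mul_norm_sq {ι : ℝ}
    (hs : ∀ v, s (Kᗮ.starProjection v) (Kᗮ.starProjection v) ≤ ι * ‖Kᗮ.starProjection v‖ ^ 2)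
    (v : E) : K.stabilizedForm s v v ≤ max 1 ι * ‖v‖ ^ 2 := by
  rw [stabilizedForm_self, norm_sq_eq_add_norm_sq_starProjection v K]
  exact add_le_max_one_mul_add (sq_nonneg _) (sq_nonneg _) (hs v)

lemma stabilizedForm_self_pos {ι : ℝ} (hι : 0 < ι)
    (hs : ∀ v, ι * ‖Kᗮ.starProjection v‖ ^ 2 ≤ s (Kᗮ.starProjection v) (Kᗮ.starProjection v))
    {v : E} (hv : v ≠ 0) : 0 < K.stabilizedForm s v v :=
  (mul_pos (lt_min one_pos hι) (pow_pos (norm_pos_iff.mpr hv) 2)).trans_le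
    (min_mul_norm_sq_le_stabilizedForm_self hs v)

end Submodule

theorem stabilized_form_inner_product_equivalent_general
    {H : Type*} [NormedAddCommGroup H] [InnerProductSpace ℝ H] [CompleteSpace H]
    (W : Submodule ℝ H) (hW : IsClosed (W : Set H))
    (s : H → H → ℝ)
    (hs_lin₁ : ∀ v, IsLinearMap ℝ fun u => s u v)
    (hs_symm : ∀ u v, s u v = s v u)
    (ι₁ ι₂ : ℝ) (h₁ : 0 < ι₁)
    (P₀ T₀ : H → H)
    (hP₀ : ∀ v, haveI : CompleteSpace W := hW.completeSpace_coe
      P₀ v = ((W.orthogonalProjectionOnto v : W) : H))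
    (hT₀ : ∀ v, T₀ v = v - P₀ v)
    (hs_bounds : ∀ v : H,
      ι₁ * ‖T₀ v‖ ^ 2 ≤ s (T₀ v) (T₀ v) ∧ s (T₀ v) (T₀ v) ≤ ι₂ * ‖T₀ v‖ ^ 2) :
    let ah : H → H → ℝ := fun u v => ⟪P₀ u, P₀ v⟫ + s (T₀ u) (T₀ v)
    -- `a_h` is an inner product on `H`:
    (∀ u v, ah u v = ah v u) ∧
    (∀ v, IsLinearMap ℝ fun u => ah u v) ∧
    (∀ v : H, v ≠ 0 → 0 < ah v v) ∧
    -- whose induced norm is equivalent to the original one: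
    (∀ v : H,
      Real.sqrt (min 1 ι₁) * ‖v‖ ≤ Real.sqrt (ah v v) ∧
      Real.sqrt (ah v v) ≤ Real.sqrt (max 1 ι₂) * ‖v‖) := by
  have : CompleteSpace W := hW.completeSpace_coe
  obtain rfl : P₀ = W.starProjection := funext hP₀
  obtain rfl : T₀ = Wᗮ.starProjection :=
    funext fun v => (hT₀ v).trans (W.starProjection_orthogonal_val v).symm
  have hs_lower v := (hs_bounds v).1
  have hs_upper v := (hs_bounds v).2
  refine ⟨W.stabilizedForm_comm hs_symm, W.isLinearMap_stabilizedForm_left hs_lin₁,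
    fun v hv => W.stabilizedForm_self_pos h₁ hs_lower hv, fun v => ⟨?_, ?_⟩⟩
  · rw [← Real.sqrt_mul_sq _ (norm_nonneg v)]
    exact Real.sqrt_le_sqrt (W.min_mul_norm_sq_le_stabilizedForm_self hs_lower v)
  · rw [← Real.sqrt_mul_sq _ (norm_nonneg v)]
    exact Real.sqrt_le_sqrt (W.stabilizedForm_self_le_max_mul_norm_sq hs_upper v)

/-- The stabilized VEM bilinear form `a_h(u,v) = ⟪Π₀u, Π₀v⟫ + s(T₀u, T₀v)`
defines an inner product on `H` whose induced norm is equivalent to the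
original norm with constants `√min(1,ι₊)` and `√max(1,ι⁺)`. -/
theorem stabilized_form_inner_product_equivalent
    {H : Type*} [NormedAddCommGroup H] [InnerProductSpace ℝ H] [CompleteSpace H]
    (W : Submodule ℝ H) (hW : IsClosed (W : Set H))
    (s : H → H → ℝ)
    (hs_lin₁ : ∀ v, IsLinearMap ℝ fun u => s u v)
    (hs_lin₂ : ∀ u, IsLinearMap ℝ (s u))
    (hs_symm : ∀ u v, s u v = s v u)
    (hs_psd : ∀ v, 0 ≤ s v v)
    (ι₁ ι₂ : ℝ) (h₁ : 0 < ι₁) (h₁₂ : ι₁ ≤ ι₂)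
    (P₀ T₀ : H → H)
    (hP₀ : ∀ v, haveI : CompleteSpace W := hW.completeSpace_coe
      P₀ v = ((W.orthogonalProjectionOnto v : W) : H))
    (hT₀ : ∀ v, T₀ v = v - P₀ v)
    (hs_bounds : ∀ v : H,
      ι₁ * ‖T₀ v‖ ^ 2 ≤ s (T₀ v) (T₀ v) ∧ s (T₀ v) (T₀ v) ≤ ι₂ * ‖T₀ v‖ ^ 2) :
    let ah : H → H → ℝ := fun u v => ⟪P₀ u, P₀ v⟫ + s (T₀ u) (T₀ v)
    -- `a_h` is an inner product on `H`:
    (∀ u v, ah u v = ah v u) ∧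
    (∀ v, IsLinearMap ℝ fun u => ah u v) ∧
    (∀ v : H, v ≠ 0 → 0 < ah v v) ∧
    -- whose induced norm is equivalent to the original one:
    (∀ v : H,
      Real.sqrt (min 1 ι₁) * ‖v‖ ≤ Real.sqrt (ah v v) ∧
      Real.sqrt (ah v v) ≤ Real.sqrt (max 1 ι₂) * ‖v‖) :=
  stabilized_form_inner_product_equivalent_general W hW s hs_lin₁ hs_symm ι₁ ι₂ h₁ P₀ T₀ hP₀ hT₀
    hs_bounds
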